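/- Suppose θ : [0,∞) → U ⊆ ℝᵐ solves θ' = −2 J(θ)ᵀ (g(θ) − Y), where g : ℝᵐ → ℝⁿ is C¹ with Jacobian J, and on U all singular values of J(θ) lie in [c, C] with 0 < c ≤ C. Then ‖g(θ(t)) − Y‖ ≤ ‖g(θ(0)) − Y‖ e^{−2c²t}, ‖θ'(t)‖ ≤ 2C‖g(θ(0)) − Y‖ e^{−2c²t}, the limit θ* = lim_{t→∞} θ(t) exists, and g(θ*) = Y. -/

import Mathlib

/-! Along the flow the residual `r = g ∘ θ - Y` satisfies `r' = -2 J Jᵀ r`, so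
`(‖r‖²)' = -4 ‖Jᵀ r‖² ≤ -4 c² ‖r‖²` and Grönwall gives `‖r(t)‖ ≤ ‖r(0)‖ e^{-2c²t}`. Then
`‖θ'‖ = 2 ‖Jᵀ r‖ ≤ 2C ‖r‖` decays at the same rate, so `θ'` is integrable on `[0, ∞)` and `θ`
converges; by continuity of `g` the limit interpolates `Y`. -/

open Filter MeasureTheory Set Real Topology
open scoped RealInnerProductSpace

theorem le_mul_exp_of_hasDerivAt_le {q q' : ℝ → ℝ} {k : ℝ}
    (hq : ∀ t ≥ (0:ℝ), HasDerivAt q (q' t) t) (hbound : ∀ t ≥ (0:ℝ), q' t ≤ k * q t) :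
    ∀ t ≥ (0:ℝ), q t ≤ q 0 * exp (k * t) := by
  intro t ht
  have := le_gronwallBound_of_liminf_deriv_right_le (ε := 0)
    (fun s hs ↦ (hq s hs.1).continuousAt.continuousWithinAt)
    (fun s hs _ hr ↦ (hq s hs.1).hasDerivWithinAt.liminf_right_slope_le hr) le_rfl
    (fun s hs ↦ by simpa using hbound s hs.1) t ⟨ht, le_rfl⟩
  simpa [gronwallBound_ε0] using this

theorem norm_le_mul_exp_of_inner_deriv_le {E : Type*} [NormedAddCommGroup E]
    [InnerProductSpace ℝ E] {r r' : ℝ → E} {a : ℝ}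
    (hr : ∀ t ≥ (0:ℝ), HasDerivAt r (r' t) t)
    (hdecay : ∀ t ≥ (0:ℝ), ⟪r t, r' t⟫ ≤ -a * ‖r t‖ ^ 2) :
    ∀ t ≥ (0:ℝ), ‖r t‖ ≤ ‖r 0‖ * exp (-a * t) := by
  intro t ht
  have hsq : ‖r t‖ ^ 2 ≤ ‖r 0‖ ^ 2 * exp (-(2 * a) * t) :=
    le_mul_exp_of_hasDerivAt_le (fun s hs ↦ (hr s hs).norm_sq)
      (fun s hs ↦ by linarith [hdecay s hs]) t ht
  have hexp : exp (-(2 * a) * t) = exp (-a * t) ^ 2 := by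
    rw [← exp_nat_mul]; ring_nf
  rw [hexp, ← mul_pow] at hsq
  exact (pow_le_pow_iff_left₀ (norm_nonneg _) (by positivity) two_ne_zero).mp hsq

theorem exists_tendsto_atTop_of_norm_deriv_le_exp {E : Type*} [NormedAddCommGroup E]
    [NormedSpace ℝ E] [CompleteSpace E] {f : ℝ → E} {K a : ℝ} (ha : 0 < a)
    (hf : ∀ t ≥ (0:ℝ), DifferentiableAt ℝ f t)
    (hbound : ∀ t ≥ (0:ℝ), ‖deriv f t‖ ≤ K * exp (-a * t)) :
    ∃ L, Tendsto f atTop (𝓝 L) := by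
  have hint : IntegrableOn (deriv f) (Ioi 0) := by
    refine Integrable.mono' ((integrableOn_exp_mul_Ioi (neg_lt_zero.mpr ha) 0).const_mul K)
      (aestronglyMeasurable_deriv f _) ?_
    rw [ae_restrict_iff' measurableSet_Ioi]
    exact ae_of_all _ fun t ht ↦ hbound t (le_of_lt ht)
  exact ⟨_, tendsto_limUnder_of_hasDerivAt_of_integrableOn_Ioi
    (fun t ht ↦ (hf t (le_of_lt ht)).hasDerivAt) hint⟩

theorem tendsto_zero_of_norm_le_mul_exp {E : Type*} [NormedAddCommGroup E] {f : ℝ → E}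
    {K a : ℝ} (ha : 0 < a) (hbound : ∀ t ≥ (0:ℝ), ‖f t‖ ≤ K * exp (-a * t)) :
    Tendsto f atTop (𝓝 0) := by
  refine squeeze_zero_norm' (eventually_ge_atTop 0 |>.mono hbound) ?_
  simpa using (tendsto_exp_neg_atTop_nhds_zero.comp
    (tendsto_id.const_mul_atTop ha)).const_mul K

theorem ContinuousLinearMap.norm_adjoint_apply_le {E F : Type*} [NormedAddCommGroup E]
    [InnerProductSpace ℝ E] [CompleteSpace E] [NormedAddCommGroup F] [InnerProductSpace ℝ F]
    [CompleteSpace F] {A : E →L[ℝ] F} {C : ℝ} (hC : 0 ≤ C) (hA : ∀ u, ‖A u‖ ≤ C * ‖u‖)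
    (v : F) : ‖adjoint A v‖ ≤ C * ‖v‖ :=
  (le_opNorm _ _).trans <| by
    rw [LinearIsometryEquiv.norm_map]
    gcongr
    exact opNorm_le_bound _ hC hA

section GradientFlow

variable {E F : Type*} [NormedAddCommGroup E] [InnerProductSpace ℝ E] [CompleteSpace E]
  [NormedAddCommGroup F] [InnerProductSpace ℝ F] [CompleteSpace F]
  {g : E → F} {Y : F} {θ : ℝ → E}

open ContinuousLinearMap

theorem gradientFlow_norm_residual_le {c : ℝ} (hc : 0 ≤ c) (hg : Differentiable ℝ g)
    (hmin : ∀ t ≥ (0:ℝ), ∀ v, c * ‖v‖ ≤ ‖adjoint (fderiv ℝ g (θ t)) v‖)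
    (hode : ∀ t ≥ (0:ℝ),
      HasDerivAt θ ((-2 : ℝ) • adjoint (fderiv ℝ g (θ t)) (g (θ t) - Y)) t) :
    ∀ t ≥ (0:ℝ), ‖g (θ t) - Y‖ ≤ ‖g (θ 0) - Y‖ * exp (-(2 * c ^ 2) * t) := by
  refine norm_le_mul_exp_of_inner_deriv_le
    (fun t ht ↦ ((hg (θ t)).hasFDerivAt.comp_hasDerivAt t (hode t ht)).sub_const Y) ?_
  intro t ht
  set J := fderiv ℝ g (θ t)
  set r := g (θ t) - Y
  have hJJ : ⟪r, J ((-2 : ℝ) • adjoint J r)⟫ = -2 * ‖adjoint J r‖ ^ 2 := by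
    rw [map_smul, inner_smul_right, ← adjoint_inner_left, real_inner_self_eq_norm_sq]
  have hsq : (c * ‖r‖) ^ 2 ≤ ‖adjoint J r‖ ^ 2 := by
    gcongr
    exact hmin t ht r
  rw [hJJ]
  nlinarith

theorem gradientFlow_norm_deriv_le {c C : ℝ} (hc : 0 ≤ c) (hC : 0 ≤ C) (hg : Differentiable ℝ g)
    (hmin : ∀ t ≥ (0:ℝ), ∀ v, c * ‖v‖ ≤ ‖adjoint (fderiv ℝ g (θ t)) v‖)
    (hmax : ∀ t ≥ (0:ℝ), ∀ u, ‖fderiv ℝ g (θ t) u‖ ≤ C * ‖u‖)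
    (hode : ∀ t ≥ (0:ℝ),
      HasDerivAt θ ((-2 : ℝ) • adjoint (fderiv ℝ g (θ t)) (g (θ t) - Y)) t) :
    ∀ t ≥ (0:ℝ), ‖deriv θ t‖ ≤ 2 * C * ‖g (θ 0) - Y‖ * exp (-(2 * c ^ 2) * t) := by
  intro t ht
  calc ‖deriv θ t‖ = 2 * ‖adjoint (fderiv ℝ g (θ t)) (g (θ t) - Y)‖ := by
        rw [(hode t ht).deriv, norm_smul]; norm_num
    _ ≤ 2 * (C * ‖g (θ t) - Y‖) := by
        gcongr; exact norm_adjoint_apply_le hC (hmax t ht) _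
    _ ≤ 2 * (C * (‖g (θ 0) - Y‖ * exp (-(2 * c ^ 2) * t))) := by
        gcongr; exact gradientFlow_norm_residual_le hc hg hmin hode t ht
    _ = 2 * C * ‖g (θ 0) - Y‖ * exp (-(2 * c ^ 2) * t) := by ring

end GradientFlow

/-- Gradient flow `θ' = −2 J(θ)ᵀ (g(θ) − Y)` for the squared-error loss, under
uniform Jacobian conditioning `c ≤ σ_min(J(θ))`, `σ_max(J(θ)) ≤ C` on a set `U` containing
the trajectory, satisfies `‖g(θ(t)) − Y‖ ≤ ‖g(θ(0)) − Y‖ e^{−2c²t}`,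
`‖θ'(t)‖ ≤ 2C ‖g(θ(0)) − Y‖ e^{−2c²t}`, and `θ(t)` converges to an interpolator `θ*`. -/
theorem stmt8 (m n : ℕ) (c C : ℝ) (hc : 0 < c) (hcC : c ≤ C)
    (g : EuclideanSpace ℝ (Fin m) → EuclideanSpace ℝ (Fin n)) (hg : ContDiff ℝ 1 g)
    (U : Set (EuclideanSpace ℝ (Fin m))) (Y : EuclideanSpace ℝ (Fin n))
    (hσmin : ∀ x ∈ U, ∀ v : EuclideanSpace ℝ (Fin n),
      c * ‖v‖ ≤ ‖ContinuousLinearMap.adjoint (fderiv ℝ g x) v‖)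
    (hσmax : ∀ x ∈ U, ∀ u : EuclideanSpace ℝ (Fin m), ‖fderiv ℝ g x u‖ ≤ C * ‖u‖)
    (θ : ℝ → EuclideanSpace ℝ (Fin m)) (hmem : ∀ t ≥ (0:ℝ), θ t ∈ U)
    (hode : ∀ t ≥ (0:ℝ), HasDerivAt θ
      ((-2 : ℝ) • ContinuousLinearMap.adjoint (fderiv ℝ g (θ t)) (g (θ t) - Y)) t) :
    (∀ t ≥ (0:ℝ), ‖g (θ t) - Y‖ ≤ ‖g (θ 0) - Y‖ * Real.exp (-(2 * c ^ 2) * t)) ∧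
    (∀ t ≥ (0:ℝ), ‖deriv θ t‖ ≤ 2 * C * ‖g (θ 0) - Y‖ * Real.exp (-(2 * c ^ 2) * t)) ∧
    ∃ θstar : EuclideanSpace ℝ (Fin m),
      Tendsto θ atTop (nhds θstar) ∧ g θstar = Y := by
  have hgd : Differentiable ℝ g := hg.differentiable one_ne_zero
  have hmin := fun t ht ↦ hσmin (θ t) (hmem t ht)
  have hmax := fun t ht ↦ hσmax (θ t) (hmem t ht)
  have ha : 0 < 2 * c ^ 2 := by positivity
  have hres := gradientFlow_norm_residual_le hc.le hgd hmin hode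
  have hvel := gradientFlow_norm_deriv_le hc.le (hc.le.trans hcC) hgd hmin hmax hode
  obtain ⟨θstar, hθstar⟩ := exists_tendsto_atTop_of_norm_deriv_le_exp ha
    (fun t ht ↦ (hode t ht).differentiableAt) hvel
  refine ⟨hres, hvel, θstar, hθstar, sub_eq_zero.mp (tendsto_nhds_unique ?_
    (tendsto_zero_of_norm_le_mul_exp ha hres))⟩
  exact ((hgd.continuous.tendsto θstar).comp hθstar).sub_const Y
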